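/- arXiv:math/0605787 — 6 statements merged into one kernel-verified Lean document; each statement's English description precedes it below -/
import Mathlib

section
/- Let O be a commutative integral domain, R = O[ξ_1,…,ξ_n] the polynomial ring in n variables over O, 𝔪 = (ξ_1,…,ξ_n) the ideal of R generated by the variables, J an ideal of R with J ⊆ 𝔪, and h a nonzero element of O. Then J + (hξ_1,…,hξ_n) = (J + (h)) ∩ 𝔪 as ideals of R. -/
/-!
Since `J ≤ 𝔪`, the modular law gives `(J + (h)) ∩ 𝔪 = J + ((h) ∩ 𝔪)`, and `(h) ∩ 𝔪 = h𝔪` because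
`𝔪`, the kernel of the constant coefficient map to the domain `O`, is a prime ideal not containing
`h`.
-/

open MvPolynomial

namespace Ideal

variable {R : Type*} [CommRing R]

theorem span_singleton_inf_eq_mul_of_notMem {P : Ideal R} [P.IsPrime] {h : R} (hh : h ∉ P) :
    span {h} ⊓ P = span {h} * P := by
  refine le_antisymm (fun x ⟨hxh, hxP⟩ => ?_) mul_le_inf
  obtain ⟨z, rfl⟩ := mem_span_singleton.1 hxh
  exact mem_span_singleton_mul.2 ⟨z, (IsPrime.mem_or_mem ‹_› hxP).resolve_left hh, rfl⟩

theorem sup_span_singleton_mul_eq_of_isPrime {J P : Ideal R} [P.IsPrime] {h : R} (hJ : J ≤ P)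
    (hh : h ∉ P) : J ⊔ span {h} * P = (J ⊔ span {h}) ⊓ P := by
  rw [sup_inf_assoc_of_le _ hJ, span_singleton_inf_eq_mul_of_notMem hh]

end Ideal

namespace MvPolynomial

variable {σ R : Type*} [CommRing R]

theorem idealOfVars_eq_ker_constantCoeff :
    idealOfVars σ R = RingHom.ker (constantCoeff : MvPolynomial σ R →+* R) := by
  ext p
  rw [← pow_one (idealOfVars σ R), mem_pow_idealOfVars_iff', RingHom.mem_ker]
  simp [Finsupp.degree_eq_zero_iff, constantCoeff_eq]

instance isPrime_idealOfVars [IsDomain R] : (idealOfVars σ R).IsPrime :=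
  idealOfVars_eq_ker_constantCoeff (σ := σ) (R := R) ▸ RingHom.ker_isPrime _

theorem C_notMem_idealOfVars {r : R} (hr : r ≠ 0) : C r ∉ idealOfVars σ R := by
  simp [idealOfVars_eq_ker_constantCoeff, hr]

theorem span_range_C_mul_X (r : R) :
    Ideal.span (Set.range fun i => C r * X i) = Ideal.span {C r} * idealOfVars σ R := by
  rw [Ideal.span_mul_span', Set.singleton_mul, ← Set.range_comp]
  rfl

end MvPolynomial

/-- For `R = O[ξ₁,…,ξₙ]` over a domain `O`, an ideal `J ⊆ 𝔪 = (ξ₁,…,ξₙ)` and a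
nonzero `h ∈ O`, one has `J + (hξ₁,…,hξₙ) = (J + (h)) ∩ 𝔪`. -/
theorem stmt_4 {O : Type*} [CommRing O] [IsDomain O] (n : ℕ)
    (J : Ideal (MvPolynomial (Fin n) O))
    (hJ : J ≤ Ideal.span (Set.range (X : Fin n → MvPolynomial (Fin n) O)))
    (h : O) (hh : h ≠ 0) :
    J + Ideal.span (Set.range fun i : Fin n => (C h : MvPolynomial (Fin n) O) * X i) =
      (J + Ideal.span {(C h : MvPolynomial (Fin n) O)}) ⊓
        Ideal.span (Set.range (X : Fin n → MvPolynomial (Fin n) O)) := by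
  rw [span_range_C_mul_X]
  exact Ideal.sup_span_singleton_mul_eq_of_isPrime hJ (C_notMem_idealOfVars hh)
end

section
/- Let α_1,α_2 be positive rationals, d a rational, and g ∈ ℂ[x_1,x_2] squarefree, weighted homogeneous of degree d for the weights (α_1,α_2), with g ∈ (x_1,x_2)^3. Let u ∈ ℂ[x_1,x_2,x_3] and v ∈ ℂ[x_2,x_3] be the unique polynomials with x_3·g'_{x_1} + g'_{x_2} = u·x_1 − v·x_2, set h = (x_1−x_2x_3)·g ∈ ℂ[x_1,x_2,x_3], and define the derivations δ_1 = α_1x_1∂_1 + α_2x_2∂_2 + (α_1−α_2)x_3∂_3, δ_2 = g'_{x_2}∂_1 − g'_{x_1}∂_2 + (x_3u−v)∂_3, δ_3 = (x_1−x_2x_3)∂_3. Then: (a) δ_1(h) = (α_1+d)·h, δ_2(h) = u·h, δ_3(h) = −x_2·h, so each δ_i is a logarithmic derivation along h; (b) the determinant of the 3×3 matrix whose (i,j)-entry is the coefficient of ∂_j in δ_i equals −d·h, a nonzero constant multiple of h; (c) h belongs to the ideal generated by its three partial derivatives (condition H(h)). -/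
/-!
For the weights `(α₁, α₂, α₁ - α₂)` the factor `x₁ - x₂x₃` is weighted homogeneous of degree `α₁`,
so `h` is weighted homogeneous of degree `α₁ + d > 0` and `δ₁` is its Euler derivation: the weighted
Euler identity gives `δ₁(h) = (α₁ + d)h` and hence condition H(h). Euler's identity for `g` itself,
`α₁x₁g'_{x₁} + α₂x₂g'_{x₂} = d·g`, gives the determinant. Finally `d > 0` because `g` is a nonzero
weighted homogeneous polynomial for positive weights without constant term.
-/

open MvPolynomial

namespace MvPolynomial

variable {σ R : Type*} [CommSemiring R] {φ : MvPolynomial σ R}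

theorem IsWeightedHomogeneous.sum_smul_X_mul_pderiv [Fintype σ] {S : Type*} [CommSemiring S]
    [Algebra S R] {w : σ → S} {e : S} (h : φ.IsWeightedHomogeneous w e) :
    ∑ i, w i • (X i * pderiv i φ) = e • φ := by
  conv_lhs => rw [φ.as_sum]
  conv_rhs => rw [φ.as_sum]
  simp only [map_sum, Finset.mul_sum, Finset.smul_sum]
  rw [Finset.sum_comm]
  refine Finset.sum_congr rfl fun m hm => ?_
  simp_rw [X_mul_pderiv_monomial, smul_comm (w _), ← smul_assoc, ← Finset.sum_smul,
    ← Finsupp.weight_eq_sum, h (mem_support_iff.1 hm)]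

theorem IsWeightedHomogeneous.mem_span_pderiv [Fintype σ] {S : Type*} [Field S] [Algebra S R]
    {w : σ → S} {e : S} (h : φ.IsWeightedHomogeneous w e) (he : e ≠ 0) :
    φ ∈ Ideal.span (Set.range fun i => pderiv i φ) := by
  have hsum : ∑ i, w i • (X i * pderiv i φ) ∈ Ideal.span (Set.range fun i => pderiv i φ) :=
    sum_mem fun i _ => Submodule.smul_of_tower_mem _ _ <|
      Ideal.mul_mem_left _ _ (Ideal.subset_span ⟨i, rfl⟩)
  have := Submodule.smul_of_tower_mem _ e⁻¹ hsum
  rwa [h.sum_smul_X_mul_pderiv, inv_smul_smul₀ he] at this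

theorem IsWeightedHomogeneous.pos_of_constantCoeff_eq_zero {M : Type*} [AddCommMonoid M]
    [PartialOrder M] [IsOrderedAddMonoid M] {w : σ → M} {e : M} (hw : ∀ i, 0 < w i)
    (h : φ.IsWeightedHomogeneous w e) (hφ : φ ≠ 0) (hc : constantCoeff φ = 0) : 0 < e := by
  obtain ⟨m, hm⟩ := exists_coeff_ne_zero hφ
  have hm0 : m ≠ 0 := by rintro rfl; exact hm (by rwa [← constantCoeff_eq])
  obtain ⟨i, hi⟩ := Finsupp.ne_iff.1 hm0
  exact (hw i).trans_le (h hm ▸ Finsupp.le_weight_of_ne_zero (fun j => (hw j).le) hi)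

theorem constantCoeff_eq_zero_of_mem_span_X_image {s : Set σ} {p : MvPolynomial σ R}
    (hp : p ∈ Ideal.span (X '' s)) : constantCoeff p = 0 := by
  rw [constantCoeff_eq, ← notMem_support_iff]
  intro h0
  obtain ⟨i, -, hi⟩ := mem_ideal_span_X_image.1 hp 0 h0
  exact hi rfl

theorem pderiv_eq_zero_of_forall_mem_support {i : σ} {p : MvPolynomial σ R}
    (h : ∀ m ∈ p.support, m i = 0) : pderiv i p = 0 :=
  pderiv_eq_zero_of_notMem_vars fun hi => by
    obtain ⟨m, hm, hmi⟩ := (mem_vars_iff_mem_support i).1 hi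
    exact Finsupp.mem_support_iff.1 hmi (h m hm)

theorem isWeightedHomogeneous_X_zero_sub_X_one_mul_X_two {A M : Type*} [CommRing A]
    [AddCommGroup M] (a b : M) :
    (X 0 - X 1 * X 2 : MvPolynomial (Fin 3) A).IsWeightedHomogeneous ![a, b, a - b] a := by
  have hX12 := (isWeightedHomogeneous_X A ![a, b, a - b] 1).mul (isWeightedHomogeneous_X A _ 2)
  rw [show ![a, b, a - b] 1 + ![a, b, a - b] 2 = a by simp] at hX12
  exact (isWeightedHomogeneous_X A _ 0).sub hX12

theorem rat_smul_eq_C_mul {K : Type*} [Field K] [CharZero K] (q : ℚ) (p : MvPolynomial σ K) :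
    q • p = C (q : K) * p := by
  rw [Algebra.smul_def, algebraMap_apply, eq_ratCast]

end MvPolynomial

theorem stmt_6_general (α1 α2 d : ℚ) (hα1 : 0 < α1) (hα2 : 0 < α2)
    (g u v : MvPolynomial (Fin 3) ℂ)
    (hgx3 : ∀ m ∈ g.support, m 2 = 0)
    (hsq : Squarefree g)
    (hwh : ∀ m ∈ g.support, α1 * (m 0 : ℚ) + α2 * (m 1 : ℚ) = d)
    (hcube : g ∈ (Ideal.span {(X 0 : MvPolynomial (Fin 3) ℂ), X 1}) ^ 3)
    (huv : X 2 * pderiv 0 g + pderiv 1 g = u * X 0 - v * X 1) :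
    ∀ h : MvPolynomial (Fin 3) ℂ, h = (X 0 - X 1 * X 2) * g →
    -- (a) : the three derivations are logarithmic along h, with explicit cofactors
    (C ((α1 : ℂ)) * X 0 * pderiv 0 h + C ((α2 : ℂ)) * X 1 * pderiv 1 h
        + C ((α1 : ℂ) - (α2 : ℂ)) * X 2 * pderiv 2 h = C ((α1 : ℂ) + (d : ℂ)) * h) ∧
    (pderiv 1 g * pderiv 0 h - pderiv 0 g * pderiv 1 h + (X 2 * u - v) * pderiv 2 h
        = u * h) ∧
    ((X 0 - X 1 * X 2) * pderiv 2 h = - X 1 * h) ∧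
    -- (b) : Saito determinant
    (Matrix.det
      !![C ((α1 : ℂ)) * X 0, C ((α2 : ℂ)) * X 1, C ((α1 : ℂ) - (α2 : ℂ)) * X 2;
         pderiv 1 g, - pderiv 0 g, X 2 * u - v;
         0, 0, X 0 - X 1 * X 2] = C (-(d : ℂ)) * h ∧ d ≠ 0) ∧
    -- (c) : condition H(h)
    (h ∈ Ideal.span {pderiv 0 h, pderiv 1 h, pderiv 2 h}) := by
  rintro h rfl
  have hg : ∀ c : ℚ, g.IsWeightedHomogeneous ![α1, α2, c] d := fun c m hm => by
    rw [← mem_support_iff] at hm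
    simp [Finsupp.weight_eq_sum, Fin.sum_univ_three, hgx3 m hm, ← hwh m hm, mul_comm]
  have hg2 : pderiv 2 g = 0 := pderiv_eq_zero_of_forall_mem_support hgx3
  have hh : ((X 0 - X 1 * X 2) * g).IsWeightedHomogeneous ![α1, α2, α1 - α2] (α1 + d) :=
    (isWeightedHomogeneous_X_zero_sub_X_one_mul_X_two α1 α2).mul (hg _)
  have euler_g : C (α1 : ℂ) * (X 0 * pderiv 0 g) + C (α2 : ℂ) * (X 1 * pderiv 1 g)
      = C (d : ℂ) * g := by
    simpa [Fin.sum_univ_three, rat_smul_eq_C_mul, hg2] using (hg 0).sum_smul_X_mul_pderiv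
  have hd : 0 < d := by
    refine (hg 1).pos_of_constantCoeff_eq_zero ?_ hsq.ne_zero
      (constantCoeff_eq_zero_of_mem_span_X_image (s := {0, 1}) ?_)
    · intro i; fin_cases i <;> simp [hα1, hα2]
    · simpa [Set.image_pair] using Ideal.pow_le_self (by norm_num) hcube
  refine ⟨?_, ?_, ?_, ⟨?_, hd.ne'⟩, ?_⟩
  · simpa [Fin.sum_univ_three, rat_smul_eq_C_mul, mul_assoc] using hh.sum_smul_X_mul_pderiv
  · simp only [pderiv_mul, map_sub, pderiv_X_self, pderiv_X_of_ne, ne_eq, Fin.reduceEq,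
      not_false_eq_true, hg2]
    linear_combination g * huv
  · simp only [pderiv_mul, map_sub, pderiv_X_self, pderiv_X_of_ne, ne_eq, Fin.reduceEq,
      not_false_eq_true, hg2]
    ring
  · simp only [Matrix.det_fin_three, Matrix.of_apply, Matrix.cons_val', Matrix.cons_val_zero,
      Matrix.empty_val', Matrix.cons_val_fin_one, Matrix.cons_val_one, Matrix.head_cons,
      Matrix.head_fin_const, Matrix.cons_val_two, Matrix.tail_cons, map_neg]
    linear_combination (X 1 * X 2 - X 0) * euler_g
  · refine Ideal.span_mono ?_ (hh.mem_span_pderiv (by positivity))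
    rintro _ ⟨i, rfl⟩
    fin_cases i <;> simp

/-- Saito's criterion computation for `h = (x₁ - x₂x₃)·g` with `g ∈ ℂ[x₁,x₂]`
squarefree, weighted homogeneous of degree `d` for positive rational weights
`(α₁,α₂)`, and `g ∈ (x₁,x₂)³`.  Variables `0,1,2` of `Fin 3` stand for
`x₁,x₂,x₃`; `ℂ[x₁,x₂]` is embedded as the polynomials not involving `x₃`.
Conclusions: (a) `δ₁(h) = (α₁+d)h`, `δ₂(h) = u·h`, `δ₃(h) = -x₂·h`, so the δᵢ are
logarithmic along `h`; (b) the determinant of the coefficient matrix of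
`δ₁,δ₂,δ₃` equals `-d·h` with `d ≠ 0`; (c) `h` lies in the ideal of its partial
derivatives. -/
theorem stmt_6 (α1 α2 d : ℚ) (hα1 : 0 < α1) (hα2 : 0 < α2)
    (g u v : MvPolynomial (Fin 3) ℂ)
    (hgx3 : ∀ m ∈ g.support, m 2 = 0)
    (hsq : Squarefree g)
    (hwh : ∀ m ∈ g.support, α1 * (m 0 : ℚ) + α2 * (m 1 : ℚ) = d)
    (hcube : g ∈ (Ideal.span {(X 0 : MvPolynomial (Fin 3) ℂ), X 1}) ^ 3)
    (hv : ∀ m ∈ v.support, m 0 = 0)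
    (huv : X 2 * pderiv 0 g + pderiv 1 g = u * X 0 - v * X 1) :
    ∀ h : MvPolynomial (Fin 3) ℂ, h = (X 0 - X 1 * X 2) * g →
    -- (a) : the three derivations are logarithmic along h, with explicit cofactors
    (C ((α1 : ℂ)) * X 0 * pderiv 0 h + C ((α2 : ℂ)) * X 1 * pderiv 1 h
        + C ((α1 : ℂ) - (α2 : ℂ)) * X 2 * pderiv 2 h = C ((α1 : ℂ) + (d : ℂ)) * h) ∧
    (pderiv 1 g * pderiv 0 h - pderiv 0 g * pderiv 1 h + (X 2 * u - v) * pderiv 2 h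
        = u * h) ∧
    ((X 0 - X 1 * X 2) * pderiv 2 h = - X 1 * h) ∧
    -- (b) : Saito determinant
    (Matrix.det
      !![C ((α1 : ℂ)) * X 0, C ((α2 : ℂ)) * X 1, C ((α1 : ℂ) - (α2 : ℂ)) * X 2;
         pderiv 1 g, - pderiv 0 g, X 2 * u - v;
         0, 0, X 0 - X 1 * X 2] = C (-(d : ℂ)) * h ∧ d ≠ 0) ∧
    -- (c) : condition H(h)
    (h ∈ Ideal.span {pderiv 0 h, pderiv 1 h, pderiv 2 h}) :=
  stmt_6_general α1 α2 d hα1 hα2 g u v hgx3 hsq hwh hcube huv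
end

section
/- Let g ∈ ℂ[x_1,x_2] be a squarefree nonconstant polynomial that is weighted homogeneous of some degree d for some weights (α_1,α_2) with α_1,α_2 > 0, and assume g ∈ (x_1,x_2)^2. Then every common prime factor in ℂ[x_2,x_3] of the substituted partial derivatives g'_{x_1}(x_2x_3, x_2) and g'_{x_2}(x_2x_3, x_2) is associated to x_2; that is, up to units, x_2 is the only irreducible common factor of these two polynomials. -/
/-!
Euler's identity `∑ wᵢ xᵢ ∂ᵢg = d • g` with `d > 0` shows that a common prime factor `p` of the
partials of `g` divides `g`; writing `g = p t` with `p ∤ t` then gives `p ∣ ∂ᵢp` for every `i`,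
which a degree count forbids for a nonconstant `p`. The chart `x₁ ↦ x₂x₃` becomes an isomorphism
once `x₂` is inverted on both sides, so a prime `q ≠ x₂` of `ℂ[x₂,x₃]` dividing both substituted
partials contracts to a prime of `ℂ[x₁,x₂]` dividing both partials.
-/

open MvPolynomial

namespace MvPolynomial

variable {R σ : Type*}

theorem totalDegree_pderiv_lt [CommSemiring R] {i : σ} {p : MvPolynomial σ R}
    (h : pderiv i p ≠ 0) : (pderiv i p).totalDegree < p.totalDegree := by
  have hsucc_le : ∀ m ∈ (pderiv i p).support, (m.sum fun _ e => e) + 1 ≤ p.totalDegree := by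
    intro m hm
    rw [mem_support_iff, coeff_pderiv] at hm
    have := le_totalDegree (mem_support_iff.2 (left_ne_zero_of_mul hm))
    rwa [Finsupp.sum_add_index' (fun _ => rfl) (fun _ _ _ => rfl),
      Finsupp.sum_single_index rfl] at this
  obtain ⟨m, hm⟩ := support_nonempty.2 h
  rw [totalDegree, Finset.sup_lt_iff ((Nat.succ_pos _).trans_le (hsucc_le m hm))]
  exact fun m hm => hsucc_le m hm

theorem pderiv_eq_zero_of_dvd [CommRing R] [IsDomain R] {i : σ} {p : MvPolynomial σ R}
    (h : p ∣ pderiv i p) : pderiv i p = 0 := by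
  by_contra h0
  exact (totalDegree_pderiv_lt h0).not_ge (totalDegree_le_of_dvd_of_isDomain h h0)

theorem exists_pderiv_ne_zero [CommRing R] [IsDomain R] [CharZero R] {p : MvPolynomial σ R}
    (h : p.totalDegree ≠ 0) : ∃ i, pderiv i p ≠ 0 := by
  obtain ⟨m, hm, i, hi⟩ : ∃ m ∈ p.support, ∃ i, m i ≠ 0 := by
    simpa [totalDegree_eq_zero_iff] using h
  refine ⟨i, fun h0 => ?_⟩
  have hcoeff := congrArg (coeff (m - Finsupp.single i 1)) h0
  rw [coeff_pderiv, Finsupp.sub_add_single_one_cancel hi, coeff_zero] at hcoeff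
  exact mul_ne_zero (mem_support_iff.1 hm) (Nat.cast_add_one_ne_zero _) hcoeff

theorem _root_.Prime.exists_not_dvd_pderiv {K : Type*} [Field K] [CharZero K]
    {p : MvPolynomial σ K} (hp : Prime p) : ∃ i, ¬ p ∣ pderiv i p := by
  have hdeg : p.totalDegree ≠ 0 := fun h0 => hp.not_isUnit <|
    isUnit_iff_totalDegree_of_isReduced.2 ⟨Ne.isUnit fun hc => hp.ne_zero <| by
      rw [totalDegree_eq_zero_iff_eq_C.1 h0, hc, C_0], h0⟩
  obtain ⟨i, hi⟩ := exists_pderiv_ne_zero hdeg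
  exact ⟨i, fun h => hi (pderiv_eq_zero_of_dvd h)⟩

theorem _root_.Prime.dvd_pderiv_self_of_dvd_pderiv [CommRing R] {i : σ}
    {p g : MvPolynomial σ R} (hp : Prime p) (hsq : Squarefree g) (hpg : p ∣ g)
    (h : p ∣ pderiv i g) : p ∣ pderiv i p := by
  obtain ⟨t, rfl⟩ := hpg
  have hpt : ¬ p ∣ t := fun ⟨s, hs⟩ => hp.not_isUnit (hsq p ⟨s, by rw [hs, mul_assoc]⟩)
  rw [pderiv_mul] at h
  exact (hp.dvd_or_dvd ((dvd_add_left (dvd_mul_right p _)).1 h)).resolve_right hpt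

variable [Fintype σ]

theorem IsWeightedHomogeneous.sum_rat_weight_X_mul_pderiv [CommSemiring R] [Algebra ℚ R]
    {w : σ → ℚ} {d : ℚ} {φ : MvPolynomial σ R} (h : φ.IsWeightedHomogeneous w d) :
    ∑ i : σ, w i • (X i * pderiv i φ) = d • φ := by
  conv_lhs => rw [φ.as_sum]
  simp_rw [map_sum, Finset.mul_sum, X_mul_pderiv_monomial, Finset.smul_sum]
  rw [Finset.sum_comm]
  conv_rhs => rw [φ.as_sum, Finset.smul_sum]
  refine Finset.sum_congr rfl fun m hm => ?_
  rw [← h (mem_support_iff.1 hm), Finsupp.weight_apply, Finsupp.sum_fintype _ _ (by simp),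
    Finset.sum_smul]
  refine Finset.sum_congr rfl fun i _ => ?_
  rw [smul_comm, ← Nat.cast_smul_eq_nsmul ℚ, smul_smul, nsmul_eq_mul]

theorem IsWeightedHomogeneous.pos_of_totalDegree_ne_zero [CommSemiring R] {w : σ → ℚ} {d : ℚ}
    {φ : MvPolynomial σ R} (h : φ.IsWeightedHomogeneous w d) (hw : ∀ i, 0 < w i)
    (hφ : φ.totalDegree ≠ 0) : 0 < d := by
  obtain ⟨m, hm, i, hi⟩ : ∃ m ∈ φ.support, ∃ i, m i ≠ 0 := by
    simpa [totalDegree_eq_zero_iff] using hφ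
  rw [← h (mem_support_iff.1 hm), Finsupp.weight_apply, Finsupp.sum_fintype _ _ (by simp)]
  exact Finset.sum_pos' (fun j _ => by have := hw j; positivity)
    ⟨i, Finset.mem_univ _, smul_pos (Nat.pos_of_ne_zero hi) (hw i)⟩

theorem IsWeightedHomogeneous.not_forall_prime_dvd_pderiv {K : Type*} [Field K] [CharZero K]
    {w : σ → ℚ} {d : ℚ} {g p : MvPolynomial σ K} (hg : g.IsWeightedHomogeneous w d)
    (hw : ∀ i, 0 < w i) (hnc : g.totalDegree ≠ 0) (hsq : Squarefree g) (hp : Prime p) :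
    ¬ ∀ i, p ∣ pderiv i g := by
  intro hdvd
  have hpdg : p ∣ d • g := hg.sum_rat_weight_X_mul_pderiv ▸
    Finset.dvd_sum fun i _ => dvd_smul_of_dvd _ (dvd_mul_of_dvd_right (hdvd i) _)
  have hpg : p ∣ g := by
    have hd := (hg.pos_of_totalDegree_ne_zero hw hnc).ne'
    simpa [smul_smul, inv_mul_cancel₀ hd] using dvd_smul_of_dvd d⁻¹ hpdg
  obtain ⟨i, hi⟩ := hp.exists_not_dvd_pderiv
  exact hi (hp.dvd_pderiv_self_of_dvd_pderiv hsq hpg (hdvd i))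

end MvPolynomial

theorem UniqueFactorizationMonoid.associated_pow_or_exists_prime_dvd_not_dvd {α : Type*}
    [CommMonoidWithZero α] [UniqueFactorizationMonoid α] {s Q : α}
    (hs : Irreducible s) (hQ : Q ≠ 0) :
    (∃ k, Associated (s ^ k) Q) ∨ ∃ p, Prime p ∧ p ∣ Q ∧ ¬ p ∣ s := by
  obtain ⟨k, w, hsw, rfl⟩ := WfDvdMonoid.max_power_factor hQ hs
  by_cases hw : IsUnit w
  · exact Or.inl ⟨k, associated_mul_unit_right _ _ hw⟩
  obtain ⟨p, hp, hpw⟩ := WfDvdMonoid.exists_irreducible_factor hw (right_ne_zero_of_mul hQ)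
  refine Or.inr ⟨p, hp.prime, dvd_mul_of_dvd_right hpw _, fun hps => hsw ?_⟩
  exact (hp.associated_of_dvd hs hps).symm.dvd.trans hpw

section Localization

variable {A B F : Type*} [CommSemiring A] [CommSemiring B] [FunLike F A B] [RingHomClass F A B]

theorem dvd_mul_pow_of_dvd_map {f : F} {s : A} (hf : Function.Injective f)
    (hloc : ∀ b, ∃ (N : ℕ) (a : A), b * f s ^ N = f a) {q : B} {Q a : A} {N : ℕ}
    (hQ : q * f s ^ N = f Q) (ha : q ∣ f a) : ∃ M, Q ∣ a * s ^ M := by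
  obtain ⟨u, hu⟩ := ha
  obtain ⟨M, U, hU⟩ := hloc u
  refine ⟨N + M, U, hf ?_⟩
  simp only [map_mul, map_pow, hu, ← hQ, ← hU]
  ring

/-- `hloc` says that `f` becomes surjective once `f s` is inverted; then a prime `q ∤ f s` of `B`
contracts to an ideal of `A` containing a prime. -/
theorem exists_prime_forall_dvd_of_dvd_map [IsDomain A] [UniqueFactorizationMonoid A]
    [IsDomain B] {f : F} {s : A} (hf : Function.Injective f) (hs : Irreducible s)
    (hloc : ∀ b, ∃ (N : ℕ) (a : A), b * f s ^ N = f a) {q : B} (hq : Prime q)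
    (hqs : ¬ q ∣ f s) : ∃ p, Prime p ∧ ∀ a, q ∣ f a → p ∣ a := by
  obtain ⟨N, Q, hQ⟩ := hloc q
  have hQ0 : Q ≠ 0 := by
    rintro rfl
    rw [map_zero] at hQ
    exact mul_ne_zero hq.ne_zero (pow_ne_zero _ fun h => hqs (h ▸ dvd_zero q :)) hQ
  rcases UniqueFactorizationMonoid.associated_pow_or_exists_prime_dvd_not_dvd hs hQ0 with
    ⟨k, hk⟩ | ⟨p, hp, hpQ, hps⟩
  · have hqQ : q ∣ f Q := ⟨_, hQ.symm⟩
    rw [← (hk.map f).dvd_iff_dvd_right, map_pow] at hqQ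
    exact absurd (hq.dvd_of_dvd_pow hqQ) hqs
  · refine ⟨p, hp, fun a ha => ?_⟩
    obtain ⟨M, hM⟩ := dvd_mul_pow_of_dvd_map hf hloc hQ ha
    exact (hp.dvd_or_dvd (hpQ.trans hM)).resolve_right (mt hp.dvd_of_dvd_pow hps)

end Localization

namespace MvPolynomial

variable (K : Type*) [Field K]

/-- The chart `x₁ = x₂x₃` of the blow-up of the origin: the source has variables `(x₁, x₂)`,
the target `(x₂, x₃)`. -/
noncomputable def blowupChart : MvPolynomial (Fin 2) K →ₐ[K] MvPolynomial (Fin 2) K :=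
  aeval ![X 0 * X 1, X 0]

variable {K}

@[simp]
theorem blowupChart_X_zero : blowupChart K (X 0) = X 0 * X 1 := by simp [blowupChart]

@[simp]
theorem blowupChart_X_one : blowupChart K (X 1) = X 0 := by simp [blowupChart]

theorem blowupChart_injective : Function.Injective (blowupChart K) := by
  let ι := algebraMap (MvPolynomial (Fin 2) K) (FractionRing (MvPolynomial (Fin 2) K))
  have hX1 : ι (X 1) ≠ 0 := (map_ne_zero_iff _ (IsFractionRing.injective _ _)).2 (X_ne_zero 1)
  -- `x₂ ↦ x₂, x₃ ↦ x₁/x₂` is a left inverse of the chart with values in the fraction field.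
  let inv : MvPolynomial (Fin 2) K →ₐ[K] FractionRing (MvPolynomial (Fin 2) K) :=
    aeval ![ι (X 1), ι (X 0) / ι (X 1)]
  have hcomp : inv.comp (blowupChart K) = IsScalarTower.toAlgHom K _ _ := by
    ext i
    fin_cases i
    · simp [inv, mul_div_cancel₀ _ hX1, ι]
    · simp [inv, ι]
  refine Function.Injective.of_comp (f := inv) ?_
  rw [← AlgHom.coe_comp, hcomp]
  exact IsFractionRing.injective _ _

theorem exists_mul_X_zero_pow_eq_blowupChart (b : MvPolynomial (Fin 2) K) :
    ∃ (N : ℕ) (a : MvPolynomial (Fin 2) K), b * X 0 ^ N = blowupChart K a := by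
  induction b using MvPolynomial.induction_on with
  | C c => exact ⟨0, C c, by simp⟩
  | add p q hp hq =>
    obtain ⟨N₁, a₁, h₁⟩ := hp
    obtain ⟨N₂, a₂, h₂⟩ := hq
    refine ⟨N₁ + N₂, a₁ * X 1 ^ N₂ + a₂ * X 1 ^ N₁, ?_⟩
    simp only [map_add, map_mul, map_pow, blowupChart_X_one, ← h₁, ← h₂]
    ring
  | mul_X p j hp =>
    obtain ⟨N, a, h⟩ := hp
    obtain rfl | rfl : j = 0 ∨ j = 1 := by omega
    · exact ⟨N, a * X 1, by simp only [map_mul, blowupChart_X_one, ← h]; ring⟩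
    · exact ⟨N + 1, a * X 0, by simp only [map_mul, blowupChart_X_zero, ← h]; ring⟩

end MvPolynomial

theorem stmt_9_general (g : MvPolynomial (Fin 2) ℂ)
    (hsq : Squarefree g) (hnc : g.totalDegree ≠ 0)
    (hwh : ∃ (α1 α2 : ℚ) (d : ℚ), 0 < α1 ∧ 0 < α2 ∧
      ∀ m ∈ g.support, α1 * (m 0 : ℚ) + α2 * (m 1 : ℚ) = d) :
    ∀ q : MvPolynomial (Fin 2) ℂ, Prime q →
      q ∣ aeval ![(X 0 : MvPolynomial (Fin 2) ℂ) * X 1, X 0] (pderiv 0 g) →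
      q ∣ aeval ![(X 0 : MvPolynomial (Fin 2) ℂ) * X 1, X 0] (pderiv 1 g) →
      Associated q (X 0 : MvPolynomial (Fin 2) ℂ) := by
  obtain ⟨α1, α2, d, hα1, hα2, hd⟩ := hwh
  have hg : g.IsWeightedHomogeneous ![α1, α2] d := fun m hm => by
    rw [Finsupp.weight_apply, Finsupp.sum_fintype _ _ (by simp), Fin.sum_univ_two,
      ← hd m (mem_support_iff.2 hm)]
    simp [mul_comm]
  intro q hq h0 h1
  by_contra hqX
  obtain ⟨p, hp, hpdvd⟩ := exists_prime_forall_dvd_of_dvd_map (f := blowupChart ℂ) (s := X 1)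
    blowupChart_injective X_prime.irreducible
    (by simpa only [blowupChart_X_one] using exists_mul_X_zero_pow_eq_blowupChart) hq
    (by simpa only [blowupChart_X_one] using mt (hq.associated_of_dvd X_prime) hqX)
  exact hg.not_forall_prime_dvd_pderiv (Fin.forall_fin_two.2 ⟨hα1, hα2⟩) hnc hsq hp
    (Fin.forall_fin_two.2 ⟨hpdvd _ h0, hpdvd _ h1⟩)

/-- For `g ∈ ℂ[x₁,x₂]` squarefree, nonconstant, weighted homogeneous for some
positive weights, with `g ∈ (x₁,x₂)²`, every common prime factor of
`g'_{x₁}(x₂x₃,x₂)` and `g'_{x₂}(x₂x₃,x₂)` in `ℂ[x₂,x₃]` is associated to `x₂`.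
Here `ℂ[x₂,x₃]` is `MvPolynomial (Fin 2) ℂ` with variable `0` standing for `x₂`
and variable `1` for `x₃`, and the substitution sends `x₁ ↦ x₂x₃`, `x₂ ↦ x₂`. -/
theorem stmt_9 (g : MvPolynomial (Fin 2) ℂ)
    (hsq : Squarefree g) (hnc : g.totalDegree ≠ 0)
    (hwh : ∃ (α1 α2 : ℚ) (d : ℚ), 0 < α1 ∧ 0 < α2 ∧
      ∀ m ∈ g.support, α1 * (m 0 : ℚ) + α2 * (m 1 : ℚ) = d)
    (hsq2 : g ∈ (Ideal.span {(X 0 : MvPolynomial (Fin 2) ℂ), X 1}) ^ 2) :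
    ∀ q : MvPolynomial (Fin 2) ℂ, Prime q →
      q ∣ aeval ![(X 0 : MvPolynomial (Fin 2) ℂ) * X 1, X 0] (pderiv 0 g) →
      q ∣ aeval ![(X 0 : MvPolynomial (Fin 2) ℂ) * X 1, X 0] (pderiv 1 g) →
      Associated q (X 0 : MvPolynomial (Fin 2) ℂ) :=
  stmt_9_general g hsq hnc hwh
end

section
/- Let g ∈ ℂ[x_1,x_2] be a squarefree homogeneous polynomial of degree p ≥ 3. In R = ℂ[x_1,x_2,x_3,ξ_1,ξ_2,ξ_3] set a = g'_{x_2}(x_3,1), b = g'_{x_1}(x_3,1), c = g(x_3,1) (images under the substitution x_1 ↦ x_3, x_2 ↦ 1), and define the ideals I_1 = (ξ_3, g'_{x_2}ξ_1 − g'_{x_1}ξ_2), I_2 = (x_1−x_2x_3, x_2·a·ξ_1 − x_2·b·ξ_2 + p·c·ξ_3), and I = ((x_1−x_2x_3)ξ_3, g'_{x_2}ξ_1 − g'_{x_1}ξ_2 + p·x_2^{p−2}·c·ξ_3, (x_2·a·ξ_1 − x_2·b·ξ_2 + p·c·ξ_3)·ξ_3). Then I = I_1 ∩ I_2. -/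
/-!
Write `u = x₁ - x₂x₃`, `E = g'_{x₂}ξ₁ - g'_{x₁}ξ₂`, `H = x₂aξ₁ - x₂bξ₂ + p c ξ₃` and
`F = E + p x₂^{p-2} c ξ₃`, so that `I = (uξ₃, F, Hξ₃)`. Homogeneity gives
`g'_{xᵢ}(x₂x₃, x₂) = x₂^{p-1} g'_{xᵢ}(x₃, 1)`, hence `F ≡ x₂^{p-2} H` modulo `u` and `F ∈ I₂`;
also `F ≡ E` modulo `ξ₃`. Every element of `I₁` has the form `βF + tξ₃`, so `I₁ ∩ I₂ ⊆ I` reduces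
to `ξ₃` being a nonzerodivisor modulo `I₂ = (u, H)`. This holds because `ξ₃` is prime, `ξ₃ ∤ u`,
`(u, ξ₃)` is prime (the kernel of `x₁ ↦ x₂x₃, ξ₃ ↦ 0`) and `H ∉ (u, ξ₃)` as `a ≠ 0`. Finally
`a ≠ 0` because `g'_{x₂} ≠ 0`: otherwise Euler's identity, applied twice, gives `x₁² ∣ g`.
-/

open MvPolynomial

namespace Ideal

variable {R : Type*} [CommRing R]

theorem span_mul_pair_eq_inf {u z E F H : R} (hFE : F - E ∈ span {z}) (hF : F ∈ span {u, H})
    (hz : ∀ t, t * z ∈ span {u, H} → t ∈ span {u, H}) :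
    span {u * z, F, H * z} = span {z, E} ⊓ span {u, H} := by
  obtain ⟨s, hs⟩ := mem_span_singleton'.mp hFE
  apply le_antisymm
  · simp only [span_le, Set.insert_subset_iff, Set.singleton_subset_iff]
    refine ⟨?_, ?_, ?_⟩
    · exact mem_inf.mpr ⟨mul_mem_left _ _ (subset_span (by simp)),
        mul_mem_right _ _ (subset_span (by simp))⟩
    · refine mem_inf.mpr ⟨?_, hF⟩
      rw [show F = s * z + 1 * E by linear_combination -hs]
      exact mem_span_pair.mpr ⟨s, 1, rfl⟩
    · exact mem_inf.mpr ⟨mul_mem_left _ _ (subset_span (by simp)),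
        mul_mem_right _ _ (subset_span (by simp))⟩
  · rintro f ⟨hf₁, hf₂⟩
    obtain ⟨α, β, rfl⟩ := mem_span_pair.mp hf₁
    have ht : (α - β * s) * z ∈ span {u, H} := by
      rw [show (α - β * s) * z = α * z + β * E - β * F by linear_combination -β * hs]
      exact sub_mem hf₂ (mul_mem_left _ _ hF)
    obtain ⟨w, d, hwd⟩ := mem_span_pair.mp (hz _ ht)
    rw [show α * z + β * E = β * F + w * (u * z) + d * (H * z) by
      linear_combination β * hs - z * hwd]
    refine add_mem (add_mem ?_ ?_) ?_ <;> exact mul_mem_left _ _ (subset_span (by simp))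

theorem mem_span_pair_of_mul_prime_mem [IsDomain R] {u H z t : R} (hz : Prime z) (hu : ¬z ∣ u)
    (huz : (span {u, z}).IsPrime) (hH : H ∉ span {u, z}) (ht : t * z ∈ span {u, H}) :
    t ∈ span {u, H} := by
  obtain ⟨γ, δ, h⟩ := mem_span_pair.mp ht
  have hδH : δ * H ∈ span {u, z} := mem_span_pair.mpr ⟨-γ, t, by linear_combination -h⟩
  obtain ⟨e, d, hδ⟩ := mem_span_pair.mp ((huz.mem_or_mem hδH).resolve_right hH)
  obtain ⟨w, hw⟩ : z ∣ γ + e * H :=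
    (hz.dvd_or_dvd ⟨t - d * H, by linear_combination h + H * hδ⟩).resolve_left hu
  have hzt : z * t = z * (w * u + d * H) := by linear_combination -h - H * hδ + u * hw
  rw [mul_left_cancel₀ hz.ne_zero hzt]
  exact mem_span_pair.mpr ⟨w, d, rfl⟩

end Ideal

namespace MvPolynomial

variable {σ R S : Type*} [CommSemiring R]

theorem aeval_sub_aeval_mem [CommRing S] [Algebra R S] {I : Ideal S} {v w : σ → S}
    (h : ∀ i, v i - w i ∈ I) (f : MvPolynomial σ R) : aeval v f - aeval w f ∈ I := by
  rw [← Ideal.Quotient.eq, ← Ideal.Quotient.mkₐ_eq_mk R, ← AlgHom.comp_apply,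
    ← AlgHom.comp_apply]
  congr 1
  refine algHom_ext fun i => ?_
  simpa [Ideal.Quotient.eq] using h i

theorem IsHomogeneous.aeval_scale [CommSemiring S] [Algebra R S] {φ : MvPolynomial σ R} {n : ℕ}
    (hφ : φ.IsHomogeneous n) (r : S) (v : σ → S) :
    MvPolynomial.aeval (fun i => r * v i) φ = r ^ n * MvPolynomial.aeval v φ := by
  simp only [MvPolynomial.aeval_def, eval₂_eq, Finset.mul_sum]
  refine Finset.sum_congr rfl fun m hm => ?_
  rw [hφ.degree_eq_sum_deg_support hm, ← Finset.prod_pow_eq_pow_sum]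
  simp only [mul_pow, Finset.prod_mul_distrib]
  ring

theorem IsHomogeneous.aeval_sub_pow_mul_aeval_mem [CommRing S] [Algebra R S]
    {φ : MvPolynomial (Fin 2) R} {n : ℕ} (hφ : φ.IsHomogeneous n) (x y w : S) :
    MvPolynomial.aeval ![x, y] φ - y ^ n * MvPolynomial.aeval ![w, 1] φ
      ∈ Ideal.span {x - y * w} := by
  rw [← hφ.aeval_scale]
  refine aeval_sub_aeval_mem (fun i => ?_) φ
  fin_cases i <;> simp

section Field

variable {K : Type*} [Field K] {φ : MvPolynomial (Fin 2) K} {n : ℕ}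

theorem IsHomogeneous.eq_zero_of_forall_eval_eq_zero_one [Infinite K] (hφ : φ.IsHomogeneous n)
    (h : ∀ z : K, eval ![z, 1] φ = 0) : φ = 0 := by
  have hX : X 1 * φ = 0 := by
    refine ((isHomogeneous_X K 1).mul hφ).eq_zero_of_forall_eval_eq_zero fun x => ?_
    rw [eval_mul, eval_X]
    rcases eq_or_ne (x 1) 0 with hx | hx
    · rw [hx, zero_mul]
    · have hscale : eval x φ = x 1 ^ n * eval ![x 0 / x 1, 1] φ := by
        rw [← aeval_eq_eval, ← aeval_eq_eval, ← hφ.aeval_scale]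
        congr
        funext i
        fin_cases i <;> simp [mul_div_cancel₀ _ hx]
      rw [hscale, h, mul_zero, mul_zero]
  exact (mul_eq_zero.mp hX).resolve_left (X_ne_zero 1)

variable [CharZero K]

theorem IsHomogeneous.exists_eq_X_zero_mul (hφ : φ.IsHomogeneous n) (hn : n ≠ 0)
    (h : pderiv 1 φ = 0) :
    ∃ ψ : MvPolynomial (Fin 2) K, ψ.IsHomogeneous (n - 1) ∧ pderiv 1 ψ = 0 ∧ φ = X 0 * ψ := by
  have euler : X 0 * pderiv 0 φ = C (n : K) * φ := by
    simpa [Fin.sum_univ_two, h, nsmul_eq_mul] using hφ.sum_X_mul_pderiv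
  have hC : (C (n : K)⁻¹ * C (n : K) : MvPolynomial (Fin 2) K) = 1 := by
    rw [← map_mul, inv_mul_cancel₀ (Nat.cast_ne_zero.mpr hn), map_one]
  have hφψ : φ = X 0 * (C (n : K)⁻¹ * pderiv 0 φ) := by
    linear_combination (-C (n : K)⁻¹) * euler - φ * hC
  refine ⟨_, hφ.pderiv.C_mul _, ?_, hφψ⟩
  rw [hφψ, pderiv_mul, pderiv_X_of_ne (by decide), zero_mul, zero_add] at h
  exact (mul_eq_zero.mp h).resolve_left (X_ne_zero 0)

theorem IsHomogeneous.pderiv_one_ne_zero_of_squarefree (hφ : φ.IsHomogeneous n) (hn : 2 ≤ n)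
    (hsq : Squarefree φ) : pderiv 1 φ ≠ 0 := by
  intro h
  obtain ⟨ψ, hψ, hψ1, rfl⟩ := hφ.exists_eq_X_zero_mul (by omega) h
  obtain ⟨χ, -, -, rfl⟩ := hψ.exists_eq_X_zero_mul (by omega) hψ1
  exact X_prime.not_isUnit (hsq (X 0) ⟨χ, by ring⟩)

end Field

end MvPolynomial

section SixVariables

variable {K : Type*} [Field K]

theorem not_X_dvd_X_sub_X_mul_X : ¬(X 5 : MvPolynomial (Fin 6) K) ∣ X 0 - X 1 * X 2 := by
  rintro ⟨q, hq⟩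
  simpa using congrArg (eval (Pi.single 0 1)) hq

theorem ker_aeval_eq_span_X_sub_X_mul_X_X :
    RingHom.ker (aeval ![X 1 * X 2, X 1, X 2, X 3, X 4, 0] :
      MvPolynomial (Fin 6) K →ₐ[K] MvPolynomial (Fin 6) K) =
      Ideal.span {X 0 - X 1 * X 2, X 5} := by
  refine le_antisymm (fun f hf => ?_) ?_
  · have hsub : ∀ i, (X i : MvPolynomial (Fin 6) K) - ![X 1 * X 2, X 1, X 2, X 3, X 4, 0] i
        ∈ Ideal.span {X 0 - X 1 * X 2, X 5} := by
      intro i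
      fin_cases i <;> simp <;> exact Ideal.subset_span (by simp)
    simpa only [aeval_X_left_apply, RingHom.mem_ker.mp hf, sub_zero] using
      aeval_sub_aeval_mem hsub f
  · simp [Ideal.span_le, Set.insert_subset_iff]

theorem isPrime_span_X_sub_X_mul_X_X :
    (Ideal.span {X 0 - X 1 * X 2, X 5} : Ideal (MvPolynomial (Fin 6) K)).IsPrime :=
  ker_aeval_eq_span_X_sub_X_mul_X_X (K := K) ▸ RingHom.ker_isPrime _

theorem notMem_span_X_sub_X_mul_X_X {α β : MvPolynomial (Fin 2) K}
    (e : MvPolynomial (Fin 6) K) {z : K} (hα : eval ![z, 1] α ≠ 0) :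
    X 1 * aeval ![X 2, 1] α * X 3 - X 1 * aeval ![X 2, 1] β * X 4 + e * X 5 ∉
      Ideal.span {(X 0 : MvPolynomial (Fin 6) K) - X 1 * X 2, X 5} := by
  intro h
  obtain ⟨c₀, c₅, hc⟩ := Ideal.mem_span_pair.mp h
  have heval := congrArg (aeval ![z, 1, z, 1, 0, 0]) hc
  simp only [map_add, map_sub, map_mul, comp_aeval_apply] at heval
  have hv : (fun i => eval ![z, 1, z, 1, 0, 0] (![X 2, 1] i)) = ![z, 1] := by
    funext i
    fin_cases i <;> simp
  simp [hv] at heval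
  exact hα heval.symm

end SixVariables

/-- Lemma 3.9: for `g ∈ ℂ[x₁,x₂]` squarefree homogeneous of degree `p ≥ 3`, in
`R = ℂ[x₁,x₂,x₃,ξ₁,ξ₂,ξ₃]` (variables `0,…,5` of `Fin 6` standing for
`x₁,x₂,x₃,ξ₁,ξ₂,ξ₃`), with `a = g'_{x₂}(x₃,1)`, `b = g'_{x₁}(x₃,1)`,
`c = g(x₃,1)`, the ideal `I` generated by `(x₁-x₂x₃)ξ₃`,
`g'_{x₂}ξ₁ - g'_{x₁}ξ₂ + p·x₂^{p-2}·c·ξ₃` and `(x₂aξ₁ - x₂bξ₂ + p·c·ξ₃)ξ₃`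
equals `I₁ ∩ I₂`, where `I₁ = (ξ₃, g'_{x₂}ξ₁ - g'_{x₁}ξ₂)` and
`I₂ = (x₁-x₂x₃, x₂aξ₁ - x₂bξ₂ + p·c·ξ₃)`. -/
theorem stmt_11 (p : ℕ) (hp : 3 ≤ p) (g : MvPolynomial (Fin 2) ℂ)
    (hsq : Squarefree g) (hhom : g.IsHomogeneous p) :
    ∀ G1 G2 a b c : MvPolynomial (Fin 6) ℂ,
      G1 = aeval ![(X 0 : MvPolynomial (Fin 6) ℂ), X 1] (pderiv 0 g) →
      G2 = aeval ![(X 0 : MvPolynomial (Fin 6) ℂ), X 1] (pderiv 1 g) →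
      a = aeval ![(X 2 : MvPolynomial (Fin 6) ℂ), 1] (pderiv 1 g) →
      b = aeval ![(X 2 : MvPolynomial (Fin 6) ℂ), 1] (pderiv 0 g) →
      c = aeval ![(X 2 : MvPolynomial (Fin 6) ℂ), 1] g →
      Ideal.span {((X 0 : MvPolynomial (Fin 6) ℂ) - X 1 * X 2) * X 5,
          G2 * X 3 - G1 * X 4 + C ((p : ℂ)) * X 1 ^ (p - 2) * c * X 5,
          (X 1 * a * X 3 - X 1 * b * X 4 + C ((p : ℂ)) * c * X 5) * X 5}
        = Ideal.span {(X 5 : MvPolynomial (Fin 6) ℂ), G2 * X 3 - G1 * X 4}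
          ⊓ Ideal.span {(X 0 : MvPolynomial (Fin 6) ℂ) - X 1 * X 2,
              X 1 * a * X 3 - X 1 * b * X 4 + C ((p : ℂ)) * c * X 5} := by
  rintro G1 G2 a b c rfl rfl rfl rfl rfl
  obtain ⟨z, hz⟩ : ∃ z : ℂ, eval ![z, 1] (pderiv 1 g) ≠ 0 := by
    by_contra! h
    exact hhom.pderiv_one_ne_zero_of_squarefree (by omega) hsq
      (hhom.pderiv.eq_zero_of_forall_eval_eq_zero_one h)
  obtain ⟨q₀, hq₀⟩ := Ideal.mem_span_singleton'.mp <|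
    (hhom.pderiv (i := 0)).aeval_sub_pow_mul_aeval_mem (X 0 : MvPolynomial (Fin 6) ℂ) (X 1) (X 2)
  obtain ⟨q₁, hq₁⟩ := Ideal.mem_span_singleton'.mp <|
    (hhom.pderiv (i := 1)).aeval_sub_pow_mul_aeval_mem (X 0 : MvPolynomial (Fin 6) ℂ) (X 1) (X 2)
  have hpow : (X 1 : MvPolynomial (Fin 6) ℂ) ^ (p - 1) = X 1 ^ (p - 2) * X 1 := by
    rw [← pow_succ]; congr 1; omega
  rw [hpow] at hq₀ hq₁
  refine Ideal.span_mul_pair_eq_inf (Ideal.mem_span_singleton'.mpr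
    ⟨C (p : ℂ) * X 1 ^ (p - 2) * aeval ![X 2, 1] g, by ring⟩)
    (Ideal.mem_span_pair.mpr ⟨q₁ * X 3 - q₀ * X 4, X 1 ^ (p - 2), ?_⟩) fun t ht => ?_
  · linear_combination X 3 * hq₁ - X 4 * hq₀
  · exact Ideal.mem_span_pair_of_mul_prime_mem X_prime not_X_dvd_X_sub_X_mul_X
      isPrime_span_X_sub_X_mul_X_X (notMem_span_X_sub_X_mul_X_X _ hz) ht
end

section
/- Let n ≥ 1, let α_1,…,α_n be positive rational numbers, and let χ be the ℂ-linear derivation ∑_{i=1}^n α_i x_i ∂_i of ℂ[x_1,…,x_n] (the rationals α_i being cast into ℂ). Let f ∈ ℂ[x_1,…,x_n] be nonzero with zero constant coefficient, and let q ∈ ℂ[x_1,…,x_n] satisfy χ(f) = q·f. Then there exists an exponent γ = (γ_1,…,γ_n) in the support of f such that the constant coefficient of q equals ∑_{i=1}^n α_iγ_i; in particular, the constant coefficient of q is a strictly positive rational number. -/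
open MvPolynomial Finsupp

/-
Order monomials by the weight `∑ αᵢγᵢ`, which is additive and positive on nonzero exponents. The
Euler field acts on the coefficient of `x^γ` as multiplication by the weight of `γ`. Take `γ` of
minimal weight in the support of `f`: in the coefficient of `x^γ` in `q f`, every product
`coeff a q * coeff b f` with `a ≠ 0` vanishes, because `b` has smaller weight than `γ`. Comparing
coefficients of `x^γ` in `χ(f) = q f` gives `q(0) = ∑ αᵢγᵢ`, which is positive because `γ ≠ 0`.
-/

theorem Finsupp.weight_pos_of_ne_zero {σ M : Type*} [AddCommMonoid M] [PartialOrder M]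
    [IsOrderedAddMonoid M] {w : σ → M} (hw : ∀ i, 0 < w i) {d : σ →₀ ℕ} (hd : d ≠ 0) :
    0 < weight w d := by
  obtain ⟨i, hi⟩ := Finsupp.ne_iff.mp hd
  exact (hw i).trans_le (le_weight_of_ne_zero (fun j => (hw j).le) hi)

namespace MvPolynomial

variable {σ R : Type*} [CommSemiring R]

theorem coeff_X_mul_pderiv (i : σ) (d : σ →₀ ℕ) (f : MvPolynomial σ R) :
    coeff d (X i * pderiv i f) = d i * coeff d f := by
  classical
  induction f using MvPolynomial.induction_on' with
  | monomial s a =>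
    rw [X_mul_pderiv_monomial, coeff_smul, coeff_monomial]
    split_ifs with h
    · rw [h, nsmul_eq_mul]
    · simp
  | add p q hp hq => rw [map_add, mul_add, coeff_add, hp, hq, coeff_add, mul_add]

theorem coeff_sum_C_mul_X_mul_pderiv [Fintype σ] (c : σ → R) (d : σ →₀ ℕ)
    (f : MvPolynomial σ R) :
    coeff d (∑ i, C (c i) * X i * pderiv i f) = (∑ i, c i * d i) * coeff d f := by
  simp only [coeff_sum, mul_assoc, coeff_C_mul, coeff_X_mul_pderiv, Finset.sum_mul]

theorem coeff_mul_of_weight_le {M : Type*} [AddCommMonoid M] [LinearOrder M]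
    [IsOrderedCancelAddMonoid M] {w : σ → M} (hw : ∀ i, 0 < w i) {f : MvPolynomial σ R}
    {γ : σ →₀ ℕ} (hγ : ∀ b ∈ f.support, weight w γ ≤ weight w b) (q : MvPolynomial σ R) :
    coeff γ (q * f) = coeff 0 q * coeff γ f := by
  classical
  rw [coeff_mul]
  refine Finset.sum_eq_single_of_mem (0, γ) (by simp) ?_
  rintro ⟨a, b⟩ hab hne
  rw [Finset.HasAntidiagonal.mem_antidiagonal] at hab
  have ha : a ≠ 0 := by
    rintro rfl
    exact hne (by rw [← hab, zero_add])
  have hb : weight w b < weight w γ := by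
    rw [← hab, map_add]
    exact lt_add_of_pos_left _ (weight_pos_of_ne_zero hw ha)
  rw [notMem_support_iff.mp fun hb' => (hγ b hb').not_gt hb, mul_zero]

end MvPolynomial

theorem stmt_14_general (n : ℕ) (α : Fin n → ℚ) (hα : ∀ i, 0 < α i)
    (f q : MvPolynomial (Fin n) ℂ) (hf : f ≠ 0) (hf0 : MvPolynomial.coeff 0 f = 0)
    (hχ : ∑ i : Fin n, (C ((α i : ℂ)) : MvPolynomial (Fin n) ℂ) * X i * pderiv i f
        = q * f) :
    (∃ γ ∈ f.support, MvPolynomial.coeff 0 q = ∑ i : Fin n, ((α i : ℂ)) * (γ i : ℂ)) ∧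
      ∃ r : ℚ, 0 < r ∧ MvPolynomial.coeff 0 q = (r : ℂ) := by
  obtain ⟨γ, hγ, hγmin⟩ := f.support.exists_min_image (weight α) (support_nonempty.mpr hf)
  have hq0 : coeff 0 q = ∑ i, (α i : ℂ) * γ i := by
    have h := congr_arg (coeff γ) hχ
    rw [coeff_sum_C_mul_X_mul_pderiv, coeff_mul_of_weight_le hα hγmin] at h
    exact (mul_right_cancel₀ (MvPolynomial.mem_support_iff.mp hγ) h).symm
  have hγ0 : γ ≠ 0 := by
    rintro rfl
    exact MvPolynomial.mem_support_iff.mp hγ hf0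
  refine ⟨⟨γ, hγ, hq0⟩, weight α γ, weight_pos_of_ne_zero hα hγ0, ?_⟩
  simp [hq0, weight_eq_sum, mul_comm]

/-- If `χ = ∑ αᵢ xᵢ ∂ᵢ` is an Euler vector field with positive rational weights,
`f` is nonzero with zero constant coefficient and `χ(f) = q·f`, then the constant
coefficient of `q` is `∑ αᵢγᵢ` for some exponent `γ` in the support of `f`; in
particular it is a strictly positive rational number. -/
theorem stmt_14 (n : ℕ) (hn : 1 ≤ n) (α : Fin n → ℚ) (hα : ∀ i, 0 < α i)
    (f q : MvPolynomial (Fin n) ℂ) (hf : f ≠ 0) (hf0 : MvPolynomial.coeff 0 f = 0)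
    (hχ : ∑ i : Fin n, (C ((α i : ℂ)) : MvPolynomial (Fin n) ℂ) * X i * pderiv i f
        = q * f) :
    (∃ γ ∈ f.support, MvPolynomial.coeff 0 q = ∑ i : Fin n, ((α i : ℂ)) * (γ i : ℂ)) ∧
      ∃ r : ℚ, 0 < r ∧ MvPolynomial.coeff 0 q = (r : ℂ) :=
  stmt_14_general n α hα f q hf hf0 hχ
end

section
/- In the polynomial ring R = ℂ[x_1,x_2,x_3,ξ_1,ξ_2,ξ_3], let P and Q be any two elements of the ideal generated by x_1 and x_2. Then the sequence (x_1 − x_2x_3, P, Q) is not a regular sequence on R. -/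
/-!
Modulo `f = x₁ - x₂x₃` we have `x₁ ≡ x₂x₃`, so `P` and `Q` become multiples `x₂p`, `x₂q` of
the single element `x₂`, which is not a unit in `R/(f)` since `f` and `x₂` both vanish at the
origin. In any commutative ring, a pair `(xp, xq)` with `x` not a unit is never regular:
`xq · p = xp · q ∈ (xp)` forces `p = xp · w`, and cancelling the non-zero-divisor `p` makes `x`
a unit.
-/

open MvPolynomial RingTheory.Sequence
open scoped Pointwise

theorem RingTheory.Sequence.IsRegular.quotient_span_singleton {R : Type*} [CommRing R]
    {r : R} {rs : List R} (h : IsRegular R (r :: rs)) :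
    IsRegular (R ⧸ Ideal.span {r}) (rs.map (Ideal.Quotient.mk (Ideal.span {r}))) := by
  have hspan : (r • ⊤ : Submodule R R) = Ideal.span {r} := by
    rw [← Submodule.ideal_span_singleton_smul, smul_eq_mul, Ideal.mul_top]
  have hrs : IsRegular (R ⧸ Ideal.span {r}) rs :=
    ((Submodule.quotEquivOfEq _ _ hspan).isRegular_congr rs).mp
      ((isRegular_cons_iff R r rs).mp h).2
  refine ((AddEquiv.refl _).isRegular_congr ?_).mp hrs
  exact List.forall₂_map_right_iff.mpr <|
    List.forall₂_same.mpr fun s _ y => (algebraMap_smul _ s y).symm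

theorem RingTheory.Sequence.not_isRegular_pair_of_mem_span_singleton {A : Type*} [CommRing A]
    {x P Q : A} (hx : ¬IsUnit x) (hP : P ∈ Ideal.span {x}) (hQ : Q ∈ Ideal.span {x}) :
    ¬IsRegular A [P, Q] := by
  obtain ⟨p, rfl⟩ := Ideal.mem_span_singleton.mp hP
  obtain ⟨q, rfl⟩ := Ideal.mem_span_singleton.mp hQ
  intro h
  obtain ⟨hxp, hxq⟩ := (isRegular_cons_iff A _ _).mp h
  have hxq' : IsSMulRegular (QuotSMulTop (x * p) A) (x * q) :=
    ((isRegular_cons_iff _ _ _).mp hxq).1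
  have hp : p ∈ (x * p) • (⊤ : Submodule A A) := by
    rw [← Submodule.Quotient.mk_eq_zero]
    refine hxq' (?_ : (x * q) • Submodule.Quotient.mk p = (x * q) • 0)
    rw [smul_zero, ← Submodule.Quotient.mk_smul, Submodule.Quotient.mk_eq_zero]
    have hqp : (x * q) • p = (x * p) • q := by simp only [smul_eq_mul]; ring
    exact hqp ▸ Submodule.smul_mem_pointwise_smul _ _ _ Submodule.mem_top
  obtain ⟨w, -, hw⟩ := (Submodule.mem_smul_pointwise_iff_exists _ _ _).mp hp
  rw [smul_eq_mul] at hw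
  have hpw : p • (x * w) = p • 1 := by simp only [smul_eq_mul]; linear_combination hw
  exact hx (IsUnit.of_mul_eq_one _ (hxp.of_mul hpw))

theorem Ideal.Quotient.not_isUnit_mk_of_le_ker {R S : Type*} [CommRing R] [CommRing S]
    {I : Ideal R} {g : R} (φ : R →+* S) (hI : I ≤ RingHom.ker φ) (hg : ¬IsUnit (φ g)) :
    ¬IsUnit (Ideal.Quotient.mk I g) :=
  fun h => hg (h.map (Ideal.Quotient.lift I φ hI))

/-- In `R = ℂ[x₁,x₂,x₃,ξ₁,ξ₂,ξ₃]` (variables `0,1,2` are the `xᵢ`), for any two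
elements `P, Q` of the ideal `(x₁, x₂)`, the sequence `(x₁ - x₂x₃, P, Q)` is not
a regular sequence on `R`. -/
theorem stmt_15 (P Q : MvPolynomial (Fin 6) ℂ)
    (hP : P ∈ Ideal.span {(X 0 : MvPolynomial (Fin 6) ℂ), X 1})
    (hQ : Q ∈ Ideal.span {(X 0 : MvPolynomial (Fin 6) ℂ), X 1}) :
    ¬ RingTheory.Sequence.IsRegular (MvPolynomial (Fin 6) ℂ)
        [(X 0 : MvPolynomial (Fin 6) ℂ) - X 1 * X 2, P, Q] := by
  set I := Ideal.span {(X 0 : MvPolynomial (Fin 6) ℂ) - X 1 * X 2}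
  have hX0 : Ideal.Quotient.mk I (X 0) = Ideal.Quotient.mk I (X 1) * Ideal.Quotient.mk I (X 2) := by
    rw [← map_mul, Ideal.Quotient.eq]
    exact Ideal.subset_span rfl
  have hmap : (Ideal.span {X 0, X 1}).map (Ideal.Quotient.mk I) ≤
      Ideal.span {Ideal.Quotient.mk I (X 1)} := by
    rw [Ideal.map_span, Ideal.span_le]
    rintro _ ⟨y, rfl | rfl, rfl⟩
    · rw [hX0]
      exact Ideal.mul_mem_right _ _ (Ideal.subset_span rfl)
    · exact Ideal.subset_span rfl
  have hunit : ¬IsUnit (Ideal.Quotient.mk I (X 1)) :=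
    Ideal.Quotient.not_isUnit_mk_of_le_ker (eval 0) (by simp [I, Ideal.span_le]) (by simp)
  exact fun h => not_isRegular_pair_of_mem_span_singleton hunit
    (hmap (Ideal.mem_map_of_mem _ hP)) (hmap (Ideal.mem_map_of_mem _ hQ))
    h.quotient_span_singleton
end
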